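/- arXiv:2207.05125 — 2 statements merged into one kernel-verified Lean document; each statement's English description precedes it below -/
import Mathlib

section
/- Let U and V be open subsets of a locally compact second-countable group G with V⁻¹V ⊆ U, and let Λ ⊆ G be U-separated (i.e., |Λ ∩ xU| ≤ 1 for all x ∈ G). Then the map (x, P) ↦ xP from V × Ω₀(Λ) into the hull of Λ is a homeomorphism onto its image, where Ω₀(Λ) = {P in the hull of Λ : e ∈ P} is the transversal. -/
open Pointwise Set MeasureTheory Filter Topology
open scoped ENNReal

set_option linter.unusedSectionVars false
set_option linter.unusedVariables false

variable {G : Type*} [TopologicalSpace G] [Group G] [IsTopologicalGroup G]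

/-- The space `C(G)` of closed subsets of `G`. -/
def CF (G : Type*) [TopologicalSpace G] := {s : Set G // IsClosed s}

/-- The subbasis of the Chabauty–Fell topology on `C(G)`: the sets
`O_K = {C | C ∩ K = ∅}` for `K` compact and `O^V = {C | C ∩ V ≠ ∅}` for `V` open. -/
def FellBasis (G : Type*) [TopologicalSpace G] : Set (Set (CF G)) :=
  {U | ∃ K : Set G, IsCompact K ∧ U = {C : CF G | C.1 ∩ K = ∅}} ∪
  {U | ∃ V : Set G, IsOpen V ∧ U = {C : CF G | (C.1 ∩ V).Nonempty}}

/-- The Chabauty–Fell topology. -/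
instance : TopologicalSpace (CF G) := TopologicalSpace.generateFrom (FellBasis G)

/-- Left translation of a closed set. -/
noncomputable def CF.smul (x : G) (C : CF G) : CF G := ⟨x • C.1, C.2.smul x⟩

/-- The hull of a point set `Λ`: the Chabauty–Fell closure of the set of left
translates of `Λ`. -/
def hullSet (Λ : Set G) : Set (CF G) := closure {C : CF G | ∃ x : G, C.1 = x • Λ}

/-- The punctured hull `Ω*(Λ)`: the hull minus the empty set. -/
def phull (Λ : Set G) : Set (CF G) := {C ∈ hullSet Λ | C.1.Nonempty}

/-- The transversal `Ω₀(Λ) = {P ∈ hull : e ∈ P}`. -/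
def transv (Λ : Set G) : Set (CF G) := {C ∈ hullSet Λ | (1 : G) ∈ C.1}

/-- `Λ` is relatively separated: `sup_x |Λ ∩ xU| < ∞` for some nonempty open `U`. -/
def RelSep (Λ : Set G) : Prop :=
  ∃ U : Set G, IsOpen U ∧ U.Nonempty ∧ ∃ ℓ : ℕ, ∀ x : G, (Λ ∩ x • U).encard ≤ ℓ

/-- `Λ` is separated: `|Λ ∩ xU| ≤ 1` for all `x` for some open identity neighborhood. -/
def Separated (Λ : Set G) : Prop :=
  ∃ U : Set G, IsOpen U ∧ (1 : G) ∈ U ∧ ∀ x : G, (Λ ∩ x • U).encard ≤ 1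

lemma smul_inter_empty (x : G) (s K : Set G) : (x • s) ∩ K = ∅ ↔ s ∩ (x⁻¹ • K) = ∅ := by
  have h : (x • s) ∩ K = x • (s ∩ x⁻¹ • K) := by
    rw [Set.smul_set_inter, smul_inv_smul]
  rw [h, Set.smul_set_eq_empty]

lemma smul_inter_nonempty (x : G) (s V : Set G) :
    ((x • s) ∩ V).Nonempty ↔ (s ∩ (x⁻¹ • V)).Nonempty := by
  have h : (x • s) ∩ V = x • (s ∩ x⁻¹ • V) := by
    rw [Set.smul_set_inter, smul_inv_smul]
  rw [h, Set.smul_set_nonempty]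

/-- Left translation is continuous for the Chabauty–Fell topology. -/
lemma continuous_CFsmul (x : G) : Continuous (fun C : CF G => CF.smul x C) := by
  apply continuous_generateFrom_iff.mpr
  rintro U (⟨K, hK, rfl⟩ | ⟨V, hV, rfl⟩)
  · have h : (fun C : CF G => CF.smul x C) ⁻¹' {C : CF G | C.1 ∩ K = ∅}
        = {C : CF G | C.1 ∩ (x⁻¹ • K) = ∅} := by
      ext C; exact smul_inter_empty x C.1 K
    rw [h]
    exact TopologicalSpace.isOpen_generateFrom_of_mem (Or.inl ⟨x⁻¹ • K, hK.smul x⁻¹, rfl⟩)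
  · have h : (fun C : CF G => CF.smul x C) ⁻¹' {C : CF G | (C.1 ∩ V).Nonempty}
        = {C : CF G | (C.1 ∩ (x⁻¹ • V)).Nonempty} := by
      ext C; exact smul_inter_nonempty x C.1 V
    rw [h]
    exact TopologicalSpace.isOpen_generateFrom_of_mem (Or.inr ⟨x⁻¹ • V, hV.smul x⁻¹, rfl⟩)

/-- The hull is invariant under left translations. -/
lemma smul_mem_hullSet {Λ : Set G} {C : CF G} (h : C ∈ hullSet Λ) (x : G) :
    CF.smul x C ∈ hullSet Λ := by
  refine map_mem_closure (continuous_CFsmul x) h ?_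
  rintro D ⟨y, hy⟩
  exact ⟨x * y, by simp [CF.smul, hy, mul_smul]⟩

/-
Every translate of `Λ` is `U`-separated, and "`C ∩ W` has two points" is an open condition
in the Chabauty–Fell topology since `G` is Hausdorff; so every element of the hull is
`U`-separated, and therefore meets `V` in at most one point because `V⁻¹V ⊆ U`.
On the hull elements meeting `V` the position of that point depends continuously on the set, and
`C ↦ (x, x⁻¹C)` with `{x} = C ∩ V` is a continuous left inverse of `(x, P) ↦ xP`. Continuity of
both maps rests on the joint continuity of the translation action, which is where local
compactness enters.
-/

namespace CF

lemma isOpen_setOf_inter_eq_empty {K : Set G} (hK : IsCompact K) :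
    IsOpen {C : CF G | C.1 ∩ K = ∅} :=
  TopologicalSpace.isOpen_generateFrom_of_mem (Or.inl ⟨K, hK, rfl⟩)

lemma isOpen_setOf_inter_nonempty {W : Set G} (hW : IsOpen W) :
    IsOpen {C : CF G | (C.1 ∩ W).Nonempty} :=
  TopologicalSpace.isOpen_generateFrom_of_mem (Or.inr ⟨W, hW, rfl⟩)

lemma isOpen_setOf_inter_nontrivial [T2Space G] {W : Set G} (hW : IsOpen W) :
    IsOpen {C : CF G | (C.1 ∩ W).Nontrivial} := by
  refine isOpen_iff_mem_nhds.2 fun C ⟨a, ⟨haC, haW⟩, b, ⟨hbC, hbW⟩, hab⟩ => ?_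
  obtain ⟨u, v, hu, hv, hau, hbv, huv⟩ := t2_separation hab
  have hopen := (isOpen_setOf_inter_nonempty (hu.inter hW)).inter
    (isOpen_setOf_inter_nonempty (hv.inter hW))
  refine Filter.mem_of_superset (hopen.mem_nhds ⟨⟨a, haC, hau, haW⟩, b, hbC, hbv, hbW⟩) ?_
  rintro D ⟨⟨c, hcD, hcu, hcW⟩, ⟨d, hdD, hdv, hdW⟩⟩
  exact ⟨c, ⟨hcD, hcW⟩, d, ⟨hdD, hdW⟩, huv.ne_of_mem hcu hdv⟩

variable [LocallyCompactSpace G]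

lemma isOpen_setOf_smul_inter_eq_empty {K : Set G} (hK : IsCompact K) :
    IsOpen {p : G × CF G | (CF.smul p.1 p.2).1 ∩ K = ∅} := by
  simp only [CF.smul, smul_inter_empty]
  refine isOpen_iff_mem_nhds.2 fun ⟨x₀, C₀⟩ h₀ => ?_
  have hK₀ : x₀⁻¹ • K ⊆ C₀.1ᶜ := fun y hy hyC => (h₀.le ⟨hyC, hy⟩ :)
  obtain ⟨W, hW, hWK⟩ := compact_open_separated_mul_left (hK.smul x₀⁻¹) C₀.2.isOpen_compl hK₀
  obtain ⟨W', hW', hW'W, hW'c⟩ := local_compact_nhds hW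
  -- `L` is a compact set still missing `C₀`, and it absorbs `x⁻¹ • K` for every `x` near `x₀`.
  set L := W' * x₀⁻¹ • K
  have hC₀L : C₀.1 ∩ L = ∅ :=
    disjoint_iff_inter_eq_empty.1 <| subset_compl_iff_disjoint_left.1 <|
      (mul_subset_mul_right hW'W).trans hWK
  have hx₀ : {x : G | x⁻¹ * x₀ ∈ W'} ∈ 𝓝 x₀ :=
    (continuous_inv.mul continuous_const).continuousAt.preimage_mem_nhds (by simpa using hW')
  have hL : IsOpen {C : CF G | C.1 ∩ L = ∅} :=
    isOpen_setOf_inter_eq_empty (hW'c.mul (hK.smul x₀⁻¹))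
  refine Filter.mem_of_superset (prod_mem_nhds hx₀ (hL.mem_nhds hC₀L)) ?_
  rintro ⟨x, C⟩ ⟨hx, hCL⟩
  have hxK : x⁻¹ • K ⊆ L := by
    rw [show x⁻¹ • K = (x⁻¹ * x₀) • x₀⁻¹ • K by rw [smul_smul]; group]
    exact smul_set_subset_mul hx
  exact subset_empty_iff.1 (hCL ▸ inter_subset_inter_right _ hxK)

lemma isOpen_setOf_smul_inter_nonempty {O : Set G} (hO : IsOpen O) :
    IsOpen {p : G × CF G | ((CF.smul p.1 p.2).1 ∩ O).Nonempty} := by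
  simp only [CF.smul, smul_inter_nonempty]
  refine isOpen_iff_mem_nhds.2 fun ⟨x₀, C₀⟩ ⟨c, hcC, hcO⟩ => ?_
  rw [mem_smul_set_iff_inv_smul_mem, inv_inv, smul_eq_mul] at hcO
  obtain ⟨N, O', hN, hO', hx₀N, hcO', hNO'⟩ :=
    isOpen_prod_iff.1 (hO.preimage continuous_mul) x₀ c hcO
  have hC₀ : {C : CF G | (C.1 ∩ O').Nonempty} ∈ 𝓝 C₀ :=
    (isOpen_setOf_inter_nonempty hO').mem_nhds ⟨c, hcC, hcO'⟩
  refine Filter.mem_of_superset (prod_mem_nhds (hN.mem_nhds hx₀N) hC₀) ?_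
  rintro ⟨x, C⟩ ⟨hx, c', hc'C, hc'O'⟩
  refine ⟨c', hc'C, ?_⟩
  rw [mem_smul_set_iff_inv_smul_mem, inv_inv, smul_eq_mul]
  exact hNO' (mk_mem_prod hx hc'O')

lemma continuous_smul_prod : Continuous (fun p : G × CF G => CF.smul p.1 p.2) :=
  continuous_generateFrom_iff.2 <| by
    rintro W (⟨K, hK, rfl⟩ | ⟨O, hO, rfl⟩)
    · exact isOpen_setOf_smul_inter_eq_empty hK
    · exact isOpen_setOf_smul_inter_nonempty hO

end CF

lemma subsingleton_smul_inter_smul {Λ U : Set G} (hΛ : ∀ x : G, (Λ ∩ x • U).encard ≤ 1)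
    (y z : G) : (y • Λ ∩ z • U).Subsingleton := by
  rw [show z • U = y • (y⁻¹ * z) • U by rw [smul_smul, mul_inv_cancel_left], ← smul_set_inter]
  exact (encard_le_one_iff_subsingleton.1 (hΛ _)).image _

lemma subsingleton_inter_smul_of_mem_hullSet [T2Space G] {Λ U : Set G} (hU : IsOpen U)
    (hΛ : ∀ x : G, (Λ ∩ x • U).encard ≤ 1) {C : CF G} (hC : C ∈ hullSet Λ) (z : G) :
    (C.1 ∩ z • U).Subsingleton := by
  have hclosed : IsClosed {C : CF G | (C.1 ∩ z • U).Subsingleton} := by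
    simpa only [compl_ofPred, not_nontrivial_iff] using
      (CF.isOpen_setOf_inter_nontrivial (hU.smul z)).isClosed_compl
  refine closure_minimal ?_ hclosed hC
  rintro D ⟨y, hD⟩
  simpa only [mem_ofPred_eq, hD] using subsingleton_smul_inter_smul hΛ y z

lemma subsingleton_inter_of_mem_hullSet [T2Space G] {Λ U V : Set G} (hU : IsOpen U)
    (hVU : V⁻¹ * V ⊆ U) (hΛ : ∀ x : G, (Λ ∩ x • U).encard ≤ 1) {C : CF G}
    (hC : C ∈ hullSet Λ) : (C.1 ∩ V).Subsingleton := by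
  intro a ha b hb
  have hV : V ⊆ b • U := fun v hv => by
    rw [mem_smul_set_iff_inv_smul_mem, smul_eq_mul]
    exact hVU (mul_mem_mul (inv_mem_inv.2 hb.2) hv)
  exact subsingleton_inter_smul_of_mem_hullSet hU hΛ hC b
    (inter_subset_inter_right _ hV ha) (inter_subset_inter_right _ hV hb)

lemma continuous_of_mem_inter_of_subsingleton {X : Type*} [TopologicalSpace X] {φ : X → CF G}
    (hφ : Continuous φ) {V : Set G} (hV : IsOpen V) (hsub : ∀ x, ((φ x).1 ∩ V).Subsingleton)
    {f : X → G} (hf : ∀ x, f x ∈ (φ x).1 ∩ V) : Continuous f := by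
  refine continuous_def.2 fun O hO => ?_
  convert (CF.isOpen_setOf_inter_nonempty (hO.inter hV)).preimage hφ using 1
  ext x
  refine ⟨fun hx => ⟨f x, (hf x).1, hx, (hf x).2⟩, fun ⟨c, hcφ, hcO, hcV⟩ => ?_⟩
  show f x ∈ O
  rwa [hsub x (hf x) ⟨hcφ, hcV⟩]

theorem isEmbedding_smul_transversal [LocallyCompactSpace G] {H : Set (CF G)} {V : Set G}
    (hV : IsOpen V) (hH : ∀ ⦃C⦄, C ∈ H → ∀ x : G, CF.smul x C ∈ H)
    (hHV : ∀ C ∈ H, (C.1 ∩ V).Subsingleton) :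
    IsEmbedding (fun p : V × {C ∈ H | (1 : G) ∈ C.1} =>
      (⟨CF.smul (p.1 : G) (p.2 : CF G), hH p.2.2.1 p.1⟩ : H)) := by
  let S : Set H := {C | (C.1.1 ∩ V).Nonempty}
  have mem_smul : ∀ p : V × {C ∈ H | (1 : G) ∈ C.1},
      (p.1 : G) ∈ (CF.smul (p.1 : G) (p.2 : CF G)).1 ∩ V :=
    fun p => ⟨mem_smul_set.2 ⟨1, p.2.2.2, mul_one _⟩, p.1.2⟩
  let loc : S → G := fun C => C.2.some
  have hloc : ∀ C : S, loc C ∈ C.1.1.1 ∩ V := fun C => C.2.some_mem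
  have hval : Continuous fun C : S => C.1.1 := continuous_subtype_val.comp continuous_subtype_val
  have hloc_cont : Continuous loc :=
    continuous_of_mem_inter_of_subsingleton hval hV (fun C => hHV _ C.1.2) hloc
  let g : S → V × {C ∈ H | (1 : G) ∈ C.1} := fun C =>
    (⟨loc C, (hloc C).2⟩, ⟨CF.smul (loc C)⁻¹ C.1.1, hH C.1.2 _,
      mem_inv_smul_set_iff.2 (by simpa using (hloc C).1)⟩)
  have hg : Continuous g := by
    refine (hloc_cont.subtype_mk _).prodMk (Continuous.subtype_mk ?_ _)
    exact CF.continuous_smul_prod.comp (hloc_cont.inv.prodMk hval)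
  let fS : V × {C ∈ H | (1 : G) ∈ C.1} → S := fun p =>
    ⟨⟨CF.smul (p.1 : G) (p.2 : CF G), hH p.2.2.1 p.1⟩, _, mem_smul p⟩
  have hgf : Function.LeftInverse g fS := by
    intro p
    have hp : loc (fS p) = p.1 := hHV _ (hH p.2.2.1 p.1) (hloc (fS p)) (mem_smul p)
    refine Prod.ext (Subtype.ext hp) (Subtype.ext (Subtype.ext ?_))
    simp only [g, CF.smul, hp]
    exact inv_smul_smul _ _
  have hfS : Continuous fS :=
    ((CF.continuous_smul_prod.comp ((continuous_subtype_val.comp continuous_fst).prodMk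
      (continuous_subtype_val.comp continuous_snd))).subtype_mk _).subtype_mk _
  exact IsEmbedding.subtypeVal.comp (hgf.isEmbedding hg hfS)

theorem statement5_general {G : Type*} [TopologicalSpace G] [Group G] [IsTopologicalGroup G]
    [T2Space G] [LocallyCompactSpace G]
    (U V : Set G) (hU : IsOpen U) (hV : IsOpen V) (hVU : V⁻¹ * V ⊆ U)
    (Λ : Set G) (hΛ : ∀ x : G, (Λ ∩ x • U).encard ≤ 1) :
    Topology.IsEmbedding (fun p : ↥V × ↥(transv Λ) =>
      (⟨CF.smul (↑p.1) (↑p.2), smul_mem_hullSet p.2.2.1 ↑p.1⟩ : ↥(hullSet Λ))) :=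
  isEmbedding_smul_transversal hV (fun _ hC x => smul_mem_hullSet hC x)
    fun _ hC => subsingleton_inter_of_mem_hullSet hU hVU hΛ hC

/-- Let `U, V` be open in `G` with `V⁻¹V ⊆ U` and let `Λ` be `U`-separated. Then the map
`(x, P) ↦ xP` from `V × Ω₀(Λ)` into the hull of `Λ` is a homeomorphism onto its image
(i.e. a topological embedding). -/
theorem statement5 {G : Type*} [TopologicalSpace G] [Group G] [IsTopologicalGroup G]
    [T2Space G] [LocallyCompactSpace G] [SecondCountableTopology G]
    (U V : Set G) (hU : IsOpen U) (hV : IsOpen V) (hVU : V⁻¹ * V ⊆ U)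
    (Λ : Set G) (hΛ : ∀ x : G, (Λ ∩ x • U).encard ≤ 1) :
    Topology.IsEmbedding (fun p : ↥V × ↥(transv Λ) =>
      (⟨CF.smul (↑p.1) (↑p.2), smul_mem_hullSet p.2.2.1 ↑p.1⟩ : ↥(hullSet Λ))) :=
  statement5_general U V hU hV hVU Λ hΛ
end

section
/- Let Λ be a relatively separated subset of a locally compact second-countable group G. Then the groupoid G(Λ) (the restriction of the transformation groupoid G ⋉ Ω*(Λ) to the transversal Ω₀(Λ)) is étale if and only if Λ is separated. -/
open Pointwise Set MeasureTheory Filter Topology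
open scoped ENNReal

set_option linter.unusedSectionVars false
set_option linter.unusedVariables false

variable {G : Type*} [TopologicalSpace G] [Group G] [IsTopologicalGroup G]

lemma one_mem_smul {G : Type*} [TopologicalSpace G] [Group G] [IsTopologicalGroup G]
    {x : G} {s : Set G} (h : x⁻¹ ∈ s) : (1 : G) ∈ x • s :=
  Set.mem_smul_set.mpr ⟨x⁻¹, h, by simp⟩

/-- The groupoid `G(Λ)` of a point set: pairs `(x, P)` with `P` in the transversal and
`x⁻¹ ∈ P` (so that both `P` and `xP` contain the identity). -/
def Deloid {G : Type*} [TopologicalSpace G] [Group G] [IsTopologicalGroup G] (Λ : Set G) :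
    Set (G × CF G) :=
  {p | p.2 ∈ transv Λ ∧ (p.1)⁻¹ ∈ p.2.1}

/-- The source map of the groupoid `G(Λ)`: `s(x, P) = P`. -/
def deloidSource {G : Type*} [TopologicalSpace G] [Group G] [IsTopologicalGroup G] (Λ : Set G)
    (p : ↥(Deloid Λ)) : ↥(transv Λ) := ⟨p.1.2, p.2.1⟩

/-- The range map of the groupoid `G(Λ)`: `r(x, P) = xP`. -/
noncomputable def deloidRange {G : Type*} [TopologicalSpace G] [Group G] [IsTopologicalGroup G]
    (Λ : Set G) (p : ↥(Deloid Λ)) : ↥(transv Λ) :=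
  ⟨CF.smul p.1.1 p.1.2, smul_mem_hullSet p.2.1.1 p.1.1, one_mem_smul p.2.2⟩


/-!
The source map `(x, P) ↦ P` of `G(Λ)` is always continuous and open, so it is a local
homeomorphism exactly when it is locally injective; the range map is the source map composed
with the inversion `(x, P) ↦ (x⁻¹, xP)`, a homeomorphism of `G(Λ)`.

If `|Λ ∩ xU| ≤ 1` for all `x`, the same bound passes to every `P` in the hull, so near
`(x₀, P₀)` an arrow `(x, P)` is determined by `P` as the unique point `x⁻¹` of `P ∩ x₀⁻¹U`.
If `Λ` is not separated, there are arrows `(μ⁻¹λ, λ⁻¹Λ)` with `μ⁻¹λ ≠ 1` arbitrarily close to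
the identity; compactness of the Chabauty–Fell space yields a unit `(1, P)` in their closure,
and arbitrarily close to it two distinct arrows `(t, Q)` and `(1, Q)` share their source.
-/

section FellTopology

variable {X : Type*} [TopologicalSpace X]

lemma isOpen_setOf_inter_nonempty {V : Set X} (hV : IsOpen V) :
    IsOpen {C : CF X | (C.1 ∩ V).Nonempty} :=
  TopologicalSpace.isOpen_generateFrom_of_mem (Or.inr ⟨V, hV, rfl⟩)

lemma isOpen_setOf_inter_eq_empty {K : Set X} (hK : IsCompact K) :
    IsOpen {C : CF X | C.1 ∩ K = ∅} :=
  TopologicalSpace.isOpen_generateFrom_of_mem (Or.inl ⟨K, hK, rfl⟩)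

lemma nhds_CF (C : CF X) : 𝓝 C = ⨅ s ∈ {s | C ∈ s ∧ s ∈ FellBasis X}, 𝓟 s :=
  TopologicalSpace.nhds_generateFrom

def ultrafilterLimSet (F : Ultrafilter (CF X)) : Set X :=
  {x | ∀ W : Set X, IsOpen W → x ∈ W → {C : CF X | (C.1 ∩ W).Nonempty} ∈ F}

lemma isClosed_ultrafilterLimSet (F : Ultrafilter (CF X)) : IsClosed (ultrafilterLimSet F) := by
  refine isOpen_compl_iff.mp (isOpen_iff_forall_mem_open.mpr fun x hx => ?_)
  simp only [ultrafilterLimSet, mem_compl_iff, mem_ofPred_eq, not_forall] at hx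
  obtain ⟨W, hWo, hxW, hWF⟩ := hx
  exact ⟨W, fun y hy hyS => hWF (hyS W hWo hy), hWo, hxW⟩

def ultrafilterLim (F : Ultrafilter (CF X)) : CF X :=
  ⟨ultrafilterLimSet F, isClosed_ultrafilterLimSet F⟩

lemma setOf_inter_eq_empty_mem_ultrafilter (F : Ultrafilter (CF X)) {K : Set X}
    (hK : IsCompact K) (hKF : ultrafilterLimSet F ∩ K = ∅) :
    {C : CF X | C.1 ∩ K = ∅} ∈ F := by
  refine hK.induction_on (p := fun K => {C : CF X | C.1 ∩ K = ∅} ∈ F) ?_ ?_ ?_ ?_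
  · simp only [inter_empty, ofPred_true]
    exact univ_mem
  · intro s t hst ht
    exact mem_of_superset ht fun C hC => subset_empty_iff.mp (hC ▸ inter_subset_inter_right _ hst)
  · intro s t hs ht
    filter_upwards [hs, ht] with C hCs hCt
    simp [inter_union_distrib_left, hCs, hCt]
  · intro x hxK
    have hx : x ∉ ultrafilterLimSet F := fun h => (eq_empty_iff_forall_notMem.mp hKF) x ⟨h, hxK⟩
    simp only [ultrafilterLimSet, mem_ofPred_eq, not_forall] at hx
    obtain ⟨W, hWo, hxW, hWF⟩ := hx
    refine ⟨W, mem_nhdsWithin_of_mem_nhds (hWo.mem_nhds hxW), ?_⟩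
    simpa only [compl_ofPred, not_nonempty_iff_eq_empty] using
      Ultrafilter.compl_mem_iff_notMem.mpr hWF

instance : CompactSpace (CF X) := by
  refine ⟨isCompact_iff_ultrafilter_le_nhds.mpr fun F _ => ?_⟩
  refine ⟨ultrafilterLim F, trivial, ?_⟩
  rw [nhds_CF]
  simp only [le_iInf_iff, le_principal_iff]
  rintro s ⟨hs, ⟨K, hK, rfl⟩ | ⟨V, hV, rfl⟩⟩
  · exact setOf_inter_eq_empty_mem_ultrafilter F hK hs
  · obtain ⟨x, hx, hxV⟩ := hs
    exact hx V hV hxV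

lemma isClosed_setOf_mem [LocallyCompactSpace X] (x : X) : IsClosed {C : CF X | x ∈ C.1} := by
  refine isOpen_compl_iff.mp (isOpen_iff_forall_mem_open.mpr fun C hC => ?_)
  obtain ⟨K, hKx, hKC, hK⟩ := local_compact_nhds (C.2.isOpen_compl.mem_nhds hC)
  refine ⟨{C' : CF X | C'.1 ∩ K = ∅}, ?_, isOpen_setOf_inter_eq_empty hK, ?_⟩
  · exact fun C' hC' hxC' => (eq_empty_iff_forall_notMem.mp hC') x ⟨hxC', mem_of_mem_nhds hKx⟩
  · exact eq_empty_of_forall_notMem fun y hy => hKC hy.2 hy.1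

end FellTopology

lemma isOpen_preimage_CFsmul_setOf_inter_eq_empty [LocallyCompactSpace G] {K : Set G}
    (hK : IsCompact K) :
    IsOpen ((fun p : G × CF G => CF.smul p.1 p.2) ⁻¹' {C : CF G | C.1 ∩ K = ∅}) := by
  refine isOpen_iff_mem_nhds.mpr fun ⟨x, C⟩ hxC => ?_
  change (x • C.1) ∩ K = ∅ at hxC
  rw [smul_inter_empty] at hxC
  obtain ⟨V, hV, hVC⟩ := compact_open_separated_mul_left (hK.smul x⁻¹) C.2.isOpen_compl
    fun y hy hyC => (eq_empty_iff_forall_notMem.mp hxC) y ⟨hyC, hy⟩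
  obtain ⟨L, hL, hLV, hLc⟩ := local_compact_nhds hV
  -- Near `x`, every translate `x'⁻¹ K` lies in the compact set `L x⁻¹ K`, which misses `C`.
  have hx' : {x' : G | x'⁻¹ * x ∈ L} ∈ 𝓝 x :=
    (continuous_inv.mul continuous_const).continuousAt.preimage_mem_nhds (by simpa using hL)
  have hM : {C' : CF G | C'.1 ∩ (L * x⁻¹ • K) = ∅} ∈ 𝓝 C :=
    (isOpen_setOf_inter_eq_empty (hLc.mul (hK.smul x⁻¹))).mem_nhds
      (eq_empty_of_forall_notMem fun y hy => hVC (mul_subset_mul_right hLV hy.2) hy.1)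
  filter_upwards [prod_mem_nhds hx' hM]
  rintro ⟨x', C'⟩ ⟨hx'L, hC'⟩
  change (x' • C'.1) ∩ K = ∅
  rw [smul_inter_empty]
  refine eq_empty_of_forall_notMem fun y ⟨hyC', k, hk, hky⟩ => ?_
  refine (eq_empty_iff_forall_notMem.mp hC') y ⟨hyC', x'⁻¹ * x, hx'L, x⁻¹ * k, ⟨k, hk, rfl⟩, ?_⟩
  simpa [mul_assoc] using hky

lemma isOpen_preimage_CFsmul_setOf_inter_nonempty {W : Set G} (hW : IsOpen W) :
    IsOpen ((fun p : G × CF G => CF.smul p.1 p.2) ⁻¹' {C : CF G | (C.1 ∩ W).Nonempty}) := by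
  refine isOpen_iff_forall_mem_open.mpr fun ⟨x, C⟩ hxC => ?_
  obtain ⟨_, ⟨q, hqC, rfl⟩, hxqW⟩ := id hxC
  obtain ⟨A, B, hA, hB, hxA, hqB, hAB⟩ :=
    isOpen_prod_iff.mp ((continuous_fst.mul continuous_snd).isOpen_preimage _ hW) x q hxqW
  refine ⟨A ×ˢ {D : CF G | (D.1 ∩ B).Nonempty}, ?_, hA.prod (isOpen_setOf_inter_nonempty hB),
    ⟨hxA, q, hqC, hqB⟩⟩
  rintro ⟨x', C'⟩ ⟨hx', q', hq'C, hq'B⟩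
  exact ⟨x' * q', ⟨q', hq'C, rfl⟩, hAB (mk_mem_prod hx' hq'B)⟩

lemma continuous_CFsmul_prod [LocallyCompactSpace G] :
    Continuous (fun p : G × CF G => CF.smul p.1 p.2) := by
  refine continuous_generateFrom_iff.mpr ?_
  rintro s (⟨K, hK, rfl⟩ | ⟨W, hW, rfl⟩)
  · exact isOpen_preimage_CFsmul_setOf_inter_eq_empty hK
  · exact isOpen_preimage_CFsmul_setOf_inter_nonempty hW

lemma RelSep.isClosed [T2Space G] {Λ : Set G} (hΛ : RelSep Λ) : IsClosed Λ := by
  obtain ⟨U, hU, ⟨u, hu⟩, ℓ, hℓ⟩ := hΛ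
  refine isOpen_compl_iff.mp (isOpen_iff_forall_mem_open.mpr fun z hz => ?_)
  -- `Λ` meets the open neighbourhood `z u⁻¹ U` of `z` in a finite set, which is closed.
  have hfin : (Λ ∩ (z * u⁻¹) • U).Finite :=
    encard_lt_top_iff.mp ((hℓ _).trans_lt (WithTop.coe_lt_top ℓ))
  refine ⟨(z * u⁻¹) • U ∩ (Λ ∩ (z * u⁻¹) • U)ᶜ, fun y hy hyΛ => hy.2 ⟨hyΛ, hy.1⟩,
    (hU.smul _).inter hfin.isClosed.isOpen_compl, ⟨u, hu, by simp⟩, fun h => hz h.1⟩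

lemma encard_inter_smul_le_one_of_mem_hullSet [T2Space G] {Λ U : Set G} (hU : IsOpen U)
    (hΛU : ∀ x : G, (Λ ∩ x • U).encard ≤ 1) {C : CF G} (hC : C ∈ hullSet Λ) (x : G) :
    (C.1 ∩ x • U).encard ≤ 1 := by
  refine encard_le_one_iff.mpr fun p q hp hq => by_contra fun hpq => ?_
  obtain ⟨Vp, Vq, hVp, hVq, hpVp, hqVq, hdisj⟩ := t2_separation hpq
  -- A translate `y • Λ` close to `C` would have two points in `x • U`, near `p` and near `q`.
  obtain ⟨D, ⟨⟨p', hp'D, hp'V, hp'U⟩, ⟨q', hq'D, hq'V, hq'U⟩⟩, y, hy⟩ := mem_closure_iff.mp hC _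
    ((isOpen_setOf_inter_nonempty (hVp.inter (hU.smul x))).inter
      (isOpen_setOf_inter_nonempty (hVq.inter (hU.smul x))))
    ⟨⟨p, hp.1, hpVp, hp.2⟩, ⟨q, hq.1, hqVq, hq.2⟩⟩
  rw [hy] at hp'D hq'D
  obtain ⟨lp, hlp, rfl⟩ := hp'D
  obtain ⟨lq, hlq, rfl⟩ := hq'D
  have hmem : ∀ {l : G}, y • l ∈ x • U → l ∈ (y⁻¹ * x) • U := fun h => by
    rwa [mul_smul, mem_smul_set_iff_inv_smul_mem, inv_inv]
  have := encard_le_one_iff.mp (hΛU (y⁻¹ * x)) lp lq ⟨hlp, hmem hp'U⟩ ⟨hlq, hmem hq'U⟩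
  exact disjoint_left.mp hdisj hp'V (this ▸ hq'V)

lemma isLocalHomeomorph_of_isOpenMap_of_isLocallyInjective {X Y : Type*} [TopologicalSpace X]
    [TopologicalSpace Y] {f : X → Y} (hc : Continuous f) (ho : IsOpenMap f)
    (hi : IsLocallyInjective f) : IsLocalHomeomorph f :=
  isLocalHomeomorph_iff_isOpenEmbedding_restrict.mpr fun x =>
    let ⟨U, hU, hxU, hinj⟩ := hi x
    ⟨U, hU.mem_nhds hxU, .of_continuous_injective_isOpenMap (hc.comp continuous_subtype_val)
      (injOn_iff_injective.mp hinj) (ho.domRestrict hU)⟩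

section Groupoid

variable {Λ : Set G}

lemma continuous_deloidSource : Continuous (deloidSource Λ) :=
  (continuous_snd.comp continuous_subtype_val).subtype_mk _

lemma isOpenMap_deloidSource : IsOpenMap (deloidSource Λ) := by
  intro N hN
  refine isOpen_iff_forall_mem_open.mpr ?_
  rintro _ ⟨p, hpN, rfl⟩
  obtain ⟨O, hO, rfl⟩ := isOpen_induced_iff.mp hN
  obtain ⟨A, B, hA, hB, hpA, hpB, hAB⟩ := isOpen_prod_iff.mp hO p.1.1 p.1.2 hpN
  refine ⟨Subtype.val ⁻¹' (B ∩ {C | (C.1 ∩ A⁻¹).Nonempty}), ?_,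
    (hB.inter (isOpen_setOf_inter_nonempty hA.inv)).preimage continuous_subtype_val,
    hpB, p.1.1⁻¹, p.2.2, by simpa using hpA⟩
  rintro Q ⟨hQB, y, hyQ, hyA⟩
  exact ⟨⟨(y⁻¹, Q.1), Q.2, by simpa using hyQ⟩, hAB (mk_mem_prod hyA hQB), rfl⟩

lemma isLocalHomeomorph_deloidSource_iff :
    IsLocalHomeomorph (deloidSource Λ) ↔ IsLocallyInjective (deloidSource Λ) :=
  ⟨IsLocalHomeomorph.isLocallyInjective,
    isLocalHomeomorph_of_isOpenMap_of_isLocallyInjective continuous_deloidSource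
      isOpenMap_deloidSource⟩

noncomputable def deloidInv (Λ : Set G) (p : Deloid Λ) : Deloid Λ :=
  ⟨(p.1.1⁻¹, CF.smul p.1.1 p.1.2), ⟨smul_mem_hullSet p.2.1.1 _, one_mem_smul p.2.2⟩,
    by simpa [CF.smul] using smul_mem_smul_set (a := p.1.1) p.2.1.2⟩

lemma deloidInv_involutive : Function.Involutive (deloidInv Λ) :=
  fun p => Subtype.ext (Prod.ext (inv_inv _) (Subtype.ext (inv_smul_smul p.1.1 p.1.2.1)))

lemma continuous_deloidInv [LocallyCompactSpace G] : Continuous (deloidInv Λ) :=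
  ((continuous_fst.comp continuous_subtype_val).inv.prodMk
    (continuous_CFsmul_prod.comp continuous_subtype_val)).subtype_mk _

noncomputable def deloidInvHomeomorph [LocallyCompactSpace G] (Λ : Set G) :
    Deloid Λ ≃ₜ Deloid Λ where
  toEquiv := deloidInv_involutive.toPerm _
  continuous_toFun := continuous_deloidInv
  continuous_invFun := continuous_deloidInv

lemma IsLocalHomeomorph.deloidRange [LocallyCompactSpace G]
    (h : IsLocalHomeomorph (deloidSource Λ)) : IsLocalHomeomorph (deloidRange Λ) :=
  h.comp (deloidInvHomeomorph Λ).isLocalHomeomorph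

lemma Separated.isLocallyInjective_deloidSource [T2Space G] (h : Separated Λ) :
    IsLocallyInjective (deloidSource Λ) := by
  obtain ⟨U, hU, hU1, hΛU⟩ := h
  intro a
  refine ⟨{p | p.1.1⁻¹ ∈ a.1.1⁻¹ • U},
    (hU.smul _).preimage (continuous_fst.comp continuous_subtype_val).inv,
    by simpa using smul_mem_smul_set (a := a.1.1⁻¹) hU1, fun p hp q hq hpq => ?_⟩
  have hP : q.1.2 = p.1.2 := congrArg Subtype.val hpq.symm
  have := encard_le_one_iff.mp (encard_inter_smul_le_one_of_mem_hullSet hU hΛU p.2.1.1 _) _ _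
    ⟨p.2.2, hp⟩ ⟨hP ▸ q.2.2, hq⟩
  exact Subtype.ext (Prod.ext (inv_injective this) hP.symm)

lemma exists_inv_mul_mem_of_not_separated (h : ¬ Separated Λ) {W : Set G}
    (hW : W ∈ 𝓝 (1 : G)) : ∃ m ∈ Λ, ∃ l ∈ Λ, l ≠ m ∧ m⁻¹ * l ∈ W := by
  have hW' : (fun p : G × G => p.1⁻¹ * p.2) ⁻¹' W ∈ 𝓝 ((1 : G), (1 : G)) :=
    (continuous_fst.inv.mul continuous_snd).continuousAt.preimage_mem_nhds (by simpa using hW)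
  obtain ⟨V₁, V₂, hV₁, h1V₁, hV₂, h1V₂, hVW⟩ := mem_nhds_prod_iff'.mp hW'
  simp only [Separated, not_exists, not_and, not_forall, not_le] at h
  obtain ⟨x, hx⟩ := h (V₁ ∩ V₂) (hV₁.inter hV₂) ⟨h1V₁, h1V₂⟩
  obtain ⟨_, _, ⟨hl, u, hu, rfl⟩, ⟨hm, v, hv, rfl⟩, hne⟩ := one_lt_encard_iff.mp hx
  exact ⟨x • v, hm, x • u, hl, hne, by simpa [mul_assoc] using hVW (mk_mem_prod hv.1 hu.2)⟩

lemma one_mem_closure_image_fst_of_not_separated [T2Space G] (hΛ : RelSep Λ)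
    (h : ¬ Separated Λ) :
    (1 : G) ∈ closure (Prod.fst '' {p : G × CF G | p.1 ≠ 1 ∧ p.2 ∈ transv Λ ∧ p.1⁻¹ ∈ p.2.1}) := by
  refine mem_closure_iff_nhds.mpr fun W hW => ?_
  obtain ⟨m, hm, l, hl, hne, hmlW⟩ := exists_inv_mul_mem_of_not_separated h hW
  refine ⟨m⁻¹ * l, hmlW, (m⁻¹ * l, ⟨l⁻¹ • Λ, hΛ.isClosed.smul _⟩),
    ⟨?_, ⟨subset_closure ⟨l⁻¹, rfl⟩, one_mem_smul (by simpa using hl)⟩, ?_⟩, rfl⟩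
  · simpa [inv_mul_eq_one] using hne.symm
  · simpa using smul_mem_smul_set (a := l⁻¹) hm

lemma RelSep.separated_of_isLocallyInjective_deloidSource [T2Space G] [LocallyCompactSpace G]
    (hΛ : RelSep Λ) (h : IsLocallyInjective (deloidSource Λ)) : Separated Λ := by
  by_contra hsep
  -- By compactness of `C(G)`, the arrows `(t, P)` with `t ≠ 1` accumulate at a unit `(1, P)`.
  obtain ⟨⟨_, P⟩, hPT, rfl⟩ := isClosedMap_fst_of_compactSpace.closure_image_subset _
    (one_mem_closure_image_fst_of_not_separated hΛ hsep)
  have hP : P ∈ transv Λ := closure_minimal (fun p hp => hp.2.1)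
    ((isClosed_closure.inter (isClosed_setOf_mem 1)).preimage continuous_snd) hPT
  obtain ⟨N, hN, hPN, hinj⟩ := h ⟨(1, P), hP, by simpa using hP.2⟩
  obtain ⟨O, hO, rfl⟩ := isOpen_induced_iff.mp hN
  obtain ⟨A, B, hA, hB, h1A, hPB, hAB⟩ := isOpen_prod_iff.mp hO 1 P hPN
  obtain ⟨⟨t, Q⟩, ⟨htA, hQB⟩, ht1, hQ, htQ⟩ := mem_closure_iff.mp hPT _ (hA.prod hB) ⟨h1A, hPB⟩
  -- The arrows `(t, Q)` and `(1, Q)` near `(1, P)` have the same source.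
  have := @hinj ⟨(t, Q), hQ, htQ⟩ (hAB ⟨htA, hQB⟩) ⟨(1, Q), hQ, by simpa using hQ.2⟩
    (hAB ⟨h1A, hQB⟩) rfl
  exact ht1 (congrArg (fun p : Deloid Λ => p.1.1) this)

lemma RelSep.isLocallyInjective_deloidSource_iff [T2Space G] [LocallyCompactSpace G]
    (hΛ : RelSep Λ) : IsLocallyInjective (deloidSource Λ) ↔ Separated Λ :=
  ⟨hΛ.separated_of_isLocallyInjective_deloidSource, Separated.isLocallyInjective_deloidSource⟩

end Groupoid

theorem statement6_general {G : Type*} [TopologicalSpace G] [Group G] [IsTopologicalGroup G]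
    [T2Space G] [LocallyCompactSpace G]
    (Λ : Set G) (hΛ : RelSep Λ) :
    (IsLocalHomeomorph (deloidSource Λ) ∧ IsLocalHomeomorph (deloidRange Λ)) ↔
      Separated Λ := by
  rw [← hΛ.isLocallyInjective_deloidSource_iff, ← isLocalHomeomorph_deloidSource_iff]
  exact ⟨And.left, fun h => ⟨h, h.deloidRange⟩⟩

/-- For a relatively separated subset `Λ` of a lcsc group `G`, the groupoid `G(Λ)` is étale
(its source and range maps are local homeomorphisms) if and only if `Λ` is separated. -/
theorem statement6 {G : Type*} [TopologicalSpace G] [Group G] [IsTopologicalGroup G]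
    [T2Space G] [LocallyCompactSpace G] [SecondCountableTopology G]
    (Λ : Set G) (hΛ : RelSep Λ) :
    (IsLocalHomeomorph (deloidSource Λ) ∧ IsLocalHomeomorph (deloidRange Λ)) ↔
      Separated Λ :=
  statement6_general Λ hΛ
end
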